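/- arXiv:1108.6315 — 2 statements merged into one kernel-verified Lean document; each statement's English description precedes it below -/
import Mathlib

section
/- If X is a finite set and C ⊆ 2^X is a maximum class of VC dimension d (i.e., |C(A)| = Φ_d(|A|) for all A ⊆ X), then C is maximal of VC dimension d: for any c ∈ 2^X \ C, the class C ∪ {c} has VC dimension d+1. -/
open Set

def traceOn {X : Type*} (C : Set (Set X)) (A : Set X) : Set (Set X) :=
  {s | ∃ c ∈ C, s = c ∩ A}

def Shatters {X : Type*} (C : Set (Set X)) (A : Set X) : Prop :=
  ∀ s ⊆ A, ∃ c ∈ C, c ∩ A = s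

def VCDimEq {X : Type*} (C : Set (Set X)) (d : ℕ) : Prop :=
  (∃ A : Set X, A.Finite ∧ A.ncard = d ∧ Shatters C A) ∧
    ∀ A : Set X, A.Finite → Shatters C A → A.ncard ≤ d

def Phi (d n : ℕ) : ℕ := if d ≤ n then ∑ i ∈ Finset.range (d + 1), n.choose i else 2 ^ n

/-!
Adding a set `c` to a class raises its VC dimension by at most one: if `insert c C` shatters `A`
and `a ∈ A`, then for every `s ⊆ A \ {a}` the two traces `s` and `insert a s` cannot both come
from `c`, so `C` shatters `A \ {a}`. Conversely, since `X` is finite, `C = C(X)` has exactly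
`Φ_d(|X|)` members, so `insert c C` has `Φ_d(|X|) + 1` of them, which exceeds the Sauer–Shelah
bound for classes of VC dimension at most `d`; hence `insert c C` shatters a set of size `d + 1`.
-/

lemma Phi_eq_sum_choose (d n : ℕ) : Phi d n = ∑ i ∈ Finset.Iic d, n.choose i := by
  rw [Phi, ← Nat.range_succ_eq_Iic]
  split_ifs with h
  · rfl
  rw [← Nat.sum_range_choose]
  exact Finset.sum_subset (by simp; omega) fun i _ hi ↦
    Nat.choose_eq_zero_of_lt (by simpa using hi)

lemma ncard_le_sum_choose_of_shatters_ncard_le {X : Type*} [Finite X] {D : Set (Set X)} {k : ℕ}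
    (hD : ∀ A : Set X, Shatters D A → A.ncard ≤ k) :
    D.ncard ≤ ∑ i ∈ Finset.Iic k, (Nat.card X).choose i := by
  classical
  have := Fintype.ofFinite X
  set 𝒜 : Finset (Finset X) := {t | (t : Set X) ∈ D}
  have hcard : D.ncard = 𝒜.card := by
    have himage : ((↑) : Finset X → Set X) '' 𝒜 = D := by
      ext t
      refine ⟨?_, fun ht ↦ ⟨t.toFinite.toFinset, by simpa [𝒜] using ht, by simp⟩⟩
      rintro ⟨u, hu, rfl⟩
      simpa [𝒜] using hu
    rw [← himage, ncard_image_of_injective _ Finset.coe_injective, ncard_coe_finset]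
  have hshatters {s : Finset X} (h : 𝒜.Shatters s) : Shatters D s := by
    intro t ht
    obtain ⟨u, hu, hsu⟩ := h (t := t.toFinite.toFinset) (by simpa using ht)
    refine ⟨u, by simpa [𝒜] using hu, ?_⟩
    rw [inter_comm, ← Finset.coe_inter, hsu, Finite.coe_toFinset]
  have hvcDim : 𝒜.vcDim ≤ k := Finset.sup_le fun s hs ↦ by
    simpa using hD s (hshatters (Finset.mem_shatterer.1 hs))
  calc D.ncard = 𝒜.card := hcard
    _ ≤ 𝒜.shatterer.card := 𝒜.card_le_card_shatterer
    _ ≤ ∑ i ∈ Finset.Iic 𝒜.vcDim, (Fintype.card X).choose i := Finset.card_shatterer_le_sum_vcDim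
    _ ≤ ∑ i ∈ Finset.Iic k, (Nat.card X).choose i := by
      rw [Nat.card_eq_fintype_card]
      exact Finset.sum_le_sum_of_subset (Finset.Iic_subset_Iic.2 hvcDim)

lemma traceOn_univ {X : Type*} (C : Set (Set X)) : traceOn C univ = C := by
  simp [traceOn]

section Shatters

variable {X : Type*} {C : Set (Set X)} {A B : Set X}

lemma Shatters.mono_right (h : Shatters C A) (hBA : B ⊆ A) : Shatters C B := by
  intro s hs
  obtain ⟨c, hc, hcA⟩ := h s (hs.trans hBA)
  refine ⟨c, hc, ?_⟩
  rw [← inter_eq_right.2 hBA, ← inter_assoc, hcA, inter_eq_left.2 hs]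

lemma Shatters.sdiff_singleton_of_insert {c : Set X} {a : X} (h : Shatters (insert c C) A)
    (ha : a ∈ A) : Shatters C (A \ {a}) := by
  intro s hs
  have has : a ∉ s := fun h ↦ (hs h).2 rfl
  have hsA : s ⊆ A := hs.trans sdiff_subset
  obtain ⟨c₁, hc₁, hc₁A⟩ := h s hsA
  obtain ⟨c₂, hc₂, hc₂A⟩ := h (insert a s) (insert_subset ha hsA)
  have hne : c₁ ≠ c₂ := by
    rintro rfl
    exact has (hc₁A ▸ hc₂A ▸ mem_insert a s)
  have htrace {e : Set X} (he : e ∩ A = s ∨ e ∩ A = insert a s) : e ∩ (A \ {a}) = s := by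
    rw [← inter_sdiff_assoc]
    rcases he with he | he <;> rw [he]
    exacts [sdiff_singleton_eq_self has, insert_sdiff_self_of_notMem has]
  rcases eq_or_ne c₁ c with rfl | h₁
  · exact ⟨c₂, (mem_insert_iff.1 hc₂).resolve_left hne.symm, htrace (.inr hc₂A)⟩
  · exact ⟨c₁, (mem_insert_iff.1 hc₁).resolve_left h₁, htrace (.inl hc₁A)⟩

end Shatters

lemma ncard_le_succ_of_shatters_insert {X : Type*} {C : Set (Set X)} {d : ℕ}
    (hC : ∀ A : Set X, A.Finite → Shatters C A → A.ncard ≤ d) {c A : Set X} (hA : A.Finite)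
    (h : Shatters (insert c C) A) : A.ncard ≤ d + 1 := by
  obtain rfl | ⟨a, ha⟩ := A.eq_empty_or_nonempty
  · simp
  have := hC _ hA.sdiff (h.sdiff_singleton_of_insert ha)
  rw [ncard_sdiff_singleton_of_mem ha] at this
  omega

/-- On a finite set, a d-maximum class is d-maximal: adding any new set
raises the VC dimension to d+1. -/
theorem maximum_implies_maximal {X : Type*} [Finite X] (C : Set (Set X)) (d : ℕ)
    (hVC : VCDimEq C d)
    (hmax : ∀ A : Set X, (traceOn C A).ncard = Phi d A.ncard) :
    ∀ c : Set X, c ∉ C → VCDimEq (insert c C) (d + 1) := by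
  intro c hc
  have hcard : (insert c C).ncard = Phi d (Nat.card X) + 1 := by
    rw [ncard_insert_of_notMem hc, ← ncard_univ, ← hmax, traceOn_univ]
  refine ⟨?_, fun A hA ↦ ncard_le_succ_of_shatters_insert hVC.2 hA⟩
  obtain ⟨A, hA, hdA⟩ : ∃ A, Shatters (insert c C) A ∧ d + 1 ≤ A.ncard := by
    by_contra! h
    have := ncard_le_sum_choose_of_shatters_ncard_le fun A hA ↦ Nat.le_of_lt_succ (h A hA)
    rw [hcard, Phi_eq_sum_choose] at this
    omega
  obtain ⟨B, hBA, hB⟩ := exists_subset_card_eq hdA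
  exact ⟨B, B.toFinite, hB, hA.mono_right hBA⟩
end

section
/- Suppose a family C of subsets of an infinite set A, indexed with a linear order, is d-maximum. Then there is an infinite subset A' ⊆ A and a single bit string η ∈ 2^{d+1} such that for every finite A_0 ⊆ A', the trace C(A_0) is characterized by η (i.e., C(A_0) is exactly the family of subsets of A_0 not inducing η with respect to the order). -/
open Set

def Induces {X : Type*} [LinearOrder X] {d : ℕ} (c : Set X) (η : Fin (d + 1) → Bool)
    (B : Set X) : Prop :=
  ∃ b : Fin (d + 1) → X, StrictMono b ∧ (∀ i, b i ∈ B) ∧ ∀ i, b i ∈ c ↔ η i = true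

def IsSubseq {k n : ℕ} (w : Fin k → Bool) (s : Fin n → Bool) : Prop :=
  ∃ b : Fin k → Fin n, StrictMono b ∧ ∀ i, s (b i) = w i

lemma isSubseq_nil_left {n : ℕ} (w : Fin 0 → Bool) (s : Fin n → Bool) : IsSubseq w s :=
  ⟨finZeroElim, fun i => i.elim0, fun i => i.elim0⟩

lemma not_isSubseq_nil_right {k : ℕ} (w : Fin (k + 1) → Bool) (s : Fin 0 → Bool) :
    ¬ IsSubseq w s :=
  fun ⟨b, _⟩ => (b 0).elim0

lemma IsSubseq.tail {k n : ℕ} {w : Fin (k + 1) → Bool} {s : Fin n → Bool} (h : IsSubseq w s) :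
    IsSubseq (Fin.tail w) s :=
  let ⟨b, hb, hs⟩ := h
  ⟨b ∘ Fin.succ, hb.comp Fin.strictMono_succ, fun i => hs i.succ⟩

lemma StrictMono.exists_eq_succ_comp {m n : ℕ} {b : Fin m → Fin (n + 1)} (hb : StrictMono b)
    (h : ∀ i, b i ≠ 0) : ∃ b' : Fin m → Fin n, StrictMono b' ∧ b = Fin.succ ∘ b' :=
  ⟨fun i => (b i).pred (h i), fun _ _ hij => by simpa [Fin.pred_lt_pred_iff] using hb hij,
    funext fun i => (Fin.succ_pred _ _).symm⟩

lemma isSubseq_cons_iff {k n : ℕ} (w : Fin (k + 1) → Bool) (x : Bool) (t : Fin n → Bool) :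
    IsSubseq w (Fin.cons x t) ↔ IsSubseq w t ∨ (w 0 = x ∧ IsSubseq (Fin.tail w) t) := by
  constructor
  · rintro ⟨b, hb, hs⟩
    by_cases h0 : b 0 = 0
    · have hpos : ∀ i, (b ∘ Fin.succ) i ≠ 0 := fun i =>
        (h0 ▸ hb (Fin.succ_pos i)).ne'
      obtain ⟨b', hb', hbb'⟩ := (hb.comp Fin.strictMono_succ).exists_eq_succ_comp hpos
      refine Or.inr ⟨by simpa [h0] using (hs 0).symm, b', hb', fun i => ?_⟩
      have hbi : b i.succ = (b' i).succ := congrFun hbb' i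
      simpa [hbi, Fin.tail] using hs i.succ
    · have hpos : ∀ i, b i ≠ 0 := fun i =>
        ((Fin.pos_iff_ne_zero.2 h0).trans_le (hb.monotone (Fin.zero_le i))).ne'
      obtain ⟨b', hb', rfl⟩ := hb.exists_eq_succ_comp hpos
      exact Or.inl ⟨b', hb', fun i => by simpa [Fin.tail] using hs i⟩
  · rintro (⟨b, hb, hs⟩ | ⟨rfl, b, hb, hs⟩)
    · exact ⟨Fin.succ ∘ b, Fin.strictMono_succ.comp hb, fun i => by simpa using hs i⟩
    · refine ⟨Fin.cons 0 (Fin.succ ∘ b),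
        Fin.strictMono_cons.2 ⟨fun j => Fin.succ_pos _, Fin.strictMono_succ.comp hb⟩, ?_⟩
      exact Fin.cases rfl fun i => by simpa [Fin.tail] using hs i

lemma ncard_setOf_fin_succ {n : ℕ} (P : (Fin (n + 1) → Bool) → Prop) :
    {s | P s}.ncard = ∑ x : Bool, {t : Fin n → Bool | P (Fin.cons x t)}.ncard := by
  classical
  simp only [Set.ncard_eq_toFinset_card', Set.toFinset_ofPred, Finset.card_filter]
  rw [← (Fin.consEquiv fun _ => Bool).sum_comp, Fintype.sum_prod_type]
  rfl

lemma sum_range_choose_succ (k n : ℕ) :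
    ∑ i ∈ Finset.range (k + 1), (n + 1).choose i
      = ∑ i ∈ Finset.range (k + 1), n.choose i + ∑ i ∈ Finset.range k, n.choose i := by
  rw [Finset.sum_range_succ' (fun i => (n + 1).choose i),
    Finset.sum_range_succ' (fun i => n.choose i)]
  simp only [Nat.choose_succ_succ, Nat.succ_eq_add_one, Nat.choose_zero_right,
    Finset.sum_add_distrib]
  omega

theorem ncard_not_isSubseq : ∀ {k : ℕ} (w : Fin k → Bool) (n : ℕ),
    {s : Fin n → Bool | ¬ IsSubseq w s}.ncard = ∑ i ∈ Finset.range k, n.choose i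
  | 0, w, n => by simp [isSubseq_nil_left]
  | k + 1, w, 0 => by simp [not_isSubseq_nil_right, Finset.sum_range_succ']
  | k + 1, w, n + 1 => by
    have hcons : ∀ x (t : Fin n → Bool), ¬ IsSubseq w (Fin.cons x t) ↔
        if x = w 0 then ¬ IsSubseq (Fin.tail w) t else ¬ IsSubseq w t := by
      intro x t
      rw [isSubseq_cons_iff]
      split_ifs with hx
      · exact ⟨fun h h' => h (Or.inr ⟨hx.symm, h'⟩), fun h => by
          rintro (h' | ⟨-, h'⟩) <;> [exact h h'.tail; exact h h']⟩
      · exact ⟨fun h h' => h (Or.inl h'), fun h => by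
          rintro (h' | ⟨hx', -⟩) <;> [exact h h'; exact hx hx'.symm]⟩
    rw [ncard_setOf_fin_succ, sum_range_choose_succ, ← ncard_not_isSubseq w n,
      ← ncard_not_isSubseq (Fin.tail w) n]
    simp only [hcons]
    cases w 0 <;> simp [add_comm]

lemma phi_eq_sum (d n : ℕ) : Phi d n = ∑ i ∈ Finset.range (d + 1), n.choose i := by
  unfold Phi
  split_ifs with h
  · rfl
  · rw [← Nat.sum_range_choose n]
    refine Finset.sum_subset (Finset.range_subset_range.2 (by omega)) fun i _ hi => ?_
    exact Nat.choose_eq_zero_of_lt (by simpa using hi)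

lemma phi_lt_two_pow (d : ℕ) : Phi d (d + 1) < 2 ^ (d + 1) := by
  rw [phi_eq_sum, ← Nat.sum_range_choose, Finset.sum_range_succ _ (d + 1)]
  simp

lemma traceOn_subset_powerset {X : Type*} {C : Set (Set X)} {A : Set X} :
    traceOn C A ⊆ 𝒫 A := by
  rintro _ ⟨c, -, rfl⟩
  exact inter_subset_right

section Induces

variable {X : Type*} [LinearOrder X] {d : ℕ}

lemma induces_inter_self {c A : Set X} {η : Fin (d + 1) → Bool} :
    Induces (c ∩ A) η A ↔ Induces c η A := by
  refine exists_congr fun b => and_congr_right fun _ => ?_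
  exact ⟨fun ⟨hA, h⟩ => ⟨hA, fun i => by simpa [hA i] using h i⟩,
    fun ⟨hA, h⟩ => ⟨hA, fun i => by simpa [hA i] using h i⟩⟩

lemma Induces.exists_finset {c A : Set X} {η : Fin (d + 1) → Bool} (h : Induces c η A) :
    ∃ B : Finset X, ↑B ⊆ A ∧ B.card = d + 1 ∧ Induces c η ↑B := by
  classical
  obtain ⟨b, hb, hbA, hbc⟩ := h
  refine ⟨Finset.univ.image b, ?_, ?_, b, hb, fun i => by simp, hbc⟩
  · simpa [Set.range_subset_iff] using hbA
  · simp [Finset.card_image_of_injective _ hb.injective]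

open Classical in
lemma induces_range_iff {n : ℕ} (e : Fin n ↪o X) (c : Set X) (η : Fin (d + 1) → Bool) :
    Induces c η (range e) ↔ IsSubseq η fun i => decide (e i ∈ c) := by
  constructor
  · rintro ⟨b, hb, hbe, hbc⟩
    choose b' hb' using hbe
    refine ⟨b', fun i j hij => e.lt_iff_lt.1 ?_, fun i => ?_⟩
    · simpa only [hb'] using hb hij
    · rw [Bool.eq_iff_iff, Bool.decide_iff, hb']; exact hbc i
  · rintro ⟨b, hb, hbc⟩
    refine ⟨e ∘ b, e.strictMono.comp hb, fun i => mem_range_self _, fun i => ?_⟩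
    rw [Function.comp_apply, ← Bool.decide_iff (e (b i) ∈ c), ← Bool.eq_iff_iff]; exact hbc i

open Classical in
lemma ncard_setOf_subset_range_not_induces {n : ℕ} (e : Fin n ↪o X)
    (η : Fin (d + 1) → Bool) :
    {c | c ⊆ range e ∧ ¬ Induces c η (range e)}.ncard =
      ∑ i ∈ Finset.range (d + 1), n.choose i := by
  have hword (w : Fin n → Bool) : (fun i => decide (e i ∈ e '' {j | w j})) = w := by
    funext i; simp [e.injective.mem_set_image]
  rw [← ncard_not_isSubseq η n]
  refine ncard_congr (fun c _ i => decide (e i ∈ c)) (fun c hc => ?_) (fun c c' hc hc' h => ?_)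
    fun w hw => ⟨e '' {j | w j}, ⟨image_subset_range _ _, ?_⟩, hword w⟩
  · exact (induces_range_iff e c η).not.1 hc.2
  · refine Subset.antisymm (fun x hx => ?_) fun x hx => ?_
    · obtain ⟨i, rfl⟩ := hc.1 hx
      simpa [hx] using congrFun h i
    · obtain ⟨i, rfl⟩ := hc'.1 hx
      simpa [hx] using congrFun h i
  · rwa [induces_range_iff, hword]

lemma ncard_setOf_subset_not_induces {A : Set X} (hA : A.Finite) (η : Fin (d + 1) → Bool) :
    {c | c ⊆ A ∧ ¬ Induces c η A}.ncard = Phi d A.ncard := by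
  have hcard := (ncard_eq_toFinset_card A hA).symm
  have hrange := hA.toFinset.range_orderEmbOfFin hcard
  rw [hA.coe_toFinset] at hrange
  rw [phi_eq_sum, ← ncard_setOf_subset_range_not_induces (hA.toFinset.orderEmbOfFin hcard),
    hrange]

lemma exists_forall_not_induces {C : Set (Set X)} {B : Finset X} (hB : B.card = d + 1)
    (hC : (traceOn C ↑B).ncard < 2 ^ (d + 1)) :
    ∃ η : Fin (d + 1) → Bool, ∀ c ∈ C, ¬ Induces c η ↑B := by
  obtain ⟨s, hsB, hs⟩ : ∃ s ⊆ (B : Set X), s ∉ traceOn C ↑B := by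
    by_contra! h
    have := ncard_le_ncard (show 𝒫 (B : Set X) ⊆ traceOn C ↑B from h)
      (B.finite_toSet.powerset.subset traceOn_subset_powerset)
    rw [ncard_powerset (B : Set X), ncard_coe_finset, hB] at this
    omega
  classical
  set e := B.orderEmbOfFin hB
  refine ⟨fun i => decide (e i ∈ s), fun c hc ⟨b, hb, hbB, hbc⟩ => hs ⟨c, hc, ?_⟩⟩
  obtain rfl : b = e := B.orderEmbOfFin_unique hB hbB hb
  have hrange (x : X) (hx : x ∈ B) : ∃ i, e i = x := by
    rw [← mem_range, B.range_orderEmbOfFin]; exact hx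
  ext x
  constructor
  · intro hx
    obtain ⟨i, rfl⟩ := hrange x (hsB hx)
    exact ⟨(hbc i).2 (decide_eq_true hx), hsB hx⟩
  · rintro ⟨hxc, hxB⟩
    obtain ⟨i, rfl⟩ := hrange x hxB
    exact of_decide_eq_true ((hbc i).1 hxc)

end Induces

section Ramsey

variable {α κ : Type*}

def IsMonochromatic (f : Finset α → κ) (r : ℕ) (T : Set α) : Prop :=
  ∃ c, ∀ B : Finset α, ↑B ⊆ T → B.card = r → f B = c

lemma exists_seq_insert_image_eq [DecidableEq α] {r : ℕ}
    (ih : ∀ {S : Set α}, S.Infinite → ∀ f : Finset α → κ,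
      ∃ T ⊆ S, T.Infinite ∧ IsMonochromatic f r T)
    {S : Set α} (hS : S.Infinite) (f : Finset α → κ) :
    ∃ a : ℕ → α, Function.Injective a ∧ (∀ n, a n ∈ S) ∧ ∃ col : ℕ → κ,
      ∀ n (J : Finset ℕ), (∀ m ∈ J, n < m) → J.card = r →
        f (insert (a n) (J.image a)) = col n := by
  have step : ∀ U : {U : Set α // U.Infinite}, ∃ a ∈ U.1, ∃ V : {V : Set α // V.Infinite},
      V.1 ⊆ U.1 \ {a} ∧ IsMonochromatic (f ∘ insert a) r V := by
    rintro ⟨U, hU⟩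
    obtain ⟨a, ha⟩ := hU.nonempty
    obtain ⟨V, hVU, hV, hmono⟩ := ih (hU.sdiff (finite_singleton a)) (f ∘ insert a)
    exact ⟨a, ha, ⟨V, hV⟩, hVU, hmono⟩
  choose a ha V hVU col hcol using step
  set U : ℕ → {U : Set α // U.Infinite} := fun n => V^[n] ⟨S, hS⟩
  have hU_succ (n : ℕ) : U (n + 1) = V (U n) := Function.iterate_succ_apply' _ _ _
  have hU_anti : Antitone fun n => (U n).1 := antitone_nat_of_succ_le fun n => by
    rw [hU_succ]; exact (hVU _).trans sdiff_subset
  have hmem {n m : ℕ} (h : n < m) : a (U m) ∈ (V (U n)).1 :=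
    hU_succ n ▸ hU_anti h (ha (U m))
  have hinj : Function.Injective fun n => a (U n) :=
    .of_lt_imp_ne fun n m h heq => (hVU _ (hmem h)).2 heq.symm
  refine ⟨fun n => a (U n), hinj, fun n => hU_anti n.zero_le (ha _), fun n => col (U n),
    fun n J hJ hJr => hcol _ _ ?_ (by rwa [Finset.card_image_of_injective _ hinj])⟩
  intro x hx
  obtain ⟨m, hm, rfl⟩ := Finset.mem_image.1 hx
  exact hmem (hJ m hm)

theorem exists_infinite_isMonochromatic [DecidableEq α] [Finite κ] (r : ℕ) {S : Set α}
    (hS : S.Infinite) (f : Finset α → κ) : ∃ T ⊆ S, T.Infinite ∧ IsMonochromatic f r T := by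
  induction r generalizing S f with
  | zero => exact ⟨S, Subset.rfl, hS, f ∅, fun B _ hB => by rw [Finset.card_eq_zero.1 hB]⟩
  | succ r ih =>
    obtain ⟨a, ha, haS, col, hcol⟩ := exists_seq_insert_image_eq ih hS f
    obtain ⟨c, hc⟩ := Finite.exists_infinite_fiber col
    refine ⟨a '' (col ⁻¹' {c}), image_subset_iff.2 fun n _ => haS n,
      (infinite_coe_iff.1 hc).image ha.injOn, c, fun B hB hBr => ?_⟩
    obtain ⟨J, hJc, rfl⟩ := Finset.subset_set_image_iff.1 hB
    rw [Finset.card_image_of_injective _ ha] at hBr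
    have hJ : J.Nonempty := Finset.card_pos.1 (by omega)
    -- all other indices in `J` are larger, so the colour of `B` is the one chosen at `J.min'`
    rw [← Finset.insert_erase (J.min'_mem hJ), Finset.image_insert, hcol]
    · exact hJc (J.min'_mem hJ)
    · exact fun m hm => J.min'_lt_of_mem_erase_min' hJ hm
    · rw [Finset.card_erase_of_mem (J.min'_mem hJ)]
      omega

end Ramsey

theorem maximum_homogeneous_label_general {X : Type*} [Infinite X] [LinearOrder X]
    (d : ℕ) (C : Set (Set X))
    (hmax : ∀ A₀ : Set X, A₀.Finite → (traceOn C A₀).ncard = Phi d A₀.ncard) :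
    ∃ A' : Set X, A'.Infinite ∧ ∃ η : Fin (d + 1) → Bool,
      ∀ A₀ ⊆ A', A₀.Finite →
        traceOn C A₀ = {c : Set X | c ⊆ A₀ ∧ ¬ Induces c η A₀} := by
  have hlabel (B : Finset X) :
      ∃ η : Fin (d + 1) → Bool, B.card = d + 1 → ∀ c ∈ C, ¬ Induces c η ↑B := by
    by_cases hB : B.card = d + 1
    · obtain ⟨η, hη⟩ := exists_forall_not_induces hB
        (by rw [hmax _ B.finite_toSet, ncard_coe_finset, hB]; exact phi_lt_two_pow d)
      exact ⟨η, fun _ => hη⟩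
    · exact ⟨0, fun h => absurd h hB⟩
  choose χ hχ using hlabel
  obtain ⟨A', -, hA', η, hη⟩ := exists_infinite_isMonochromatic (d + 1) infinite_univ χ
  refine ⟨A', hA', η, fun A₀ hA₀ hfin => eq_of_subset_of_ncard_le ?_ ?_ ?_⟩
  · rintro _ ⟨c, hc, rfl⟩
    refine ⟨inter_subset_right, fun hind => ?_⟩
    obtain ⟨B, hBA, hBcard, hBind⟩ := (induces_inter_self.1 hind).exists_finset
    exact hχ B hBcard c hc (hη B (hBA.trans hA₀) hBcard ▸ hBind)
  · rw [ncard_setOf_subset_not_induces hfin, hmax A₀ hfin]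
  · exact hfin.powerset.subset fun c hc => hc.1

/-- On an infinite linearly ordered set, a d-maximum class has an infinite
subset on which all finite traces are characterized by a single forbidden
label η ∈ 2^{d+1}. -/
theorem maximum_homogeneous_label {X : Type*} [Infinite X] [LinearOrder X]
    (d : ℕ) (C : Set (Set X)) (hVC : VCDimEq C d)
    (hmax : ∀ A₀ : Set X, A₀.Finite → (traceOn C A₀).ncard = Phi d A₀.ncard) :
    ∃ A' : Set X, A'.Infinite ∧ ∃ η : Fin (d + 1) → Bool,
      ∀ A₀ ⊆ A', A₀.Finite →
        traceOn C A₀ = {c : Set X | c ⊆ A₀ ∧ ¬ Induces c η A₀} :=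
  maximum_homogeneous_label_general d C hmax
end
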